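/- arXiv:2306.00307 — 3 statements merged into one kernel-verified Lean document; each statement's English description precedes it below -/
import Mathlib

section
/- Let f : ℝⁿ → ℝᵐ be continuously differentiable on a convex compact set X ⊆ ℝⁿ, let y ∈ ℝᵐ, and suppose there exist constants U_f, H_f ≥ 0 such that |f(x) − y| ≤ U_f for all x ∈ X and |f(w) − f(x) − Df(x)(w − x)| ≤ (H_f/2)|w − x|² for all x, w ∈ X. Define h(x) = ½|f(x) − y|². Then h is μ-weakly convex on X with μ = U_f·H_f, i.e., for all x, w ∈ X: h(x) ≥ h(w) + ⟨(Df(w))ᵀ(f(w) − y), x − w⟩ − (μ/2)|x − w|². -/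
open RealInnerProductSpace

/-- Weak convexity of `x ↦ ½|f(x) − y|²` for `f` continuously differentiable with
bounded residual and second-order Taylor remainder bound on a convex compact set. -/
theorem stmt2 {n m : ℕ} (f : EuclideanSpace ℝ (Fin n) → EuclideanSpace ℝ (Fin m))
    (X : Set (EuclideanSpace ℝ (Fin n))) (hXconv : Convex ℝ X) (hXcomp : IsCompact X)
    (y : EuclideanSpace ℝ (Fin m)) (Uf Hf : ℝ) (hUf : 0 ≤ Uf) (hHf : 0 ≤ Hf)
    (hdiff : ContDiff ℝ 1 f)
    (hbound : ∀ x ∈ X, ‖f x - y‖ ≤ Uf)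
    (htaylor : ∀ x ∈ X, ∀ w ∈ X,
      ‖f w - f x - fderiv ℝ f x (w - x)‖ ≤ Hf / 2 * ‖w - x‖ ^ 2) :
    ∀ x ∈ X, ∀ w ∈ X,
      1/2 * ‖f x - y‖ ^ 2 ≥
        1/2 * ‖f w - y‖ ^ 2 + ⟪f w - y, fderiv ℝ f w (x - w)⟫
          - Uf * Hf / 2 * ‖x - w‖ ^ 2 := by
  intro x hx w hw
  set v := fderiv ℝ f w (x - w) with hv
  set a := f w - y with ha
  set r := f x - f w - v with hr
  have hfx : f x - y = a + (v + r) := by rw [ha, hr]; abel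
  have h1 : ‖f x - y‖ ^ 2 = ‖a‖ ^ 2 + 2 * ⟪a, v + r⟫ + ‖v + r‖ ^ 2 := by
    rw [hfx, norm_add_sq_real]
  have hrbound : ‖r‖ ≤ Hf / 2 * ‖x - w‖ ^ 2 := htaylor w hw x hx
  have habound : ‖a‖ ≤ Uf := hbound w hw
  have hcs := abs_real_inner_le_norm a r
  have h3 : ⟪a, v + r⟫ = ⟪a, v⟫ + ⟪a, r⟫ := inner_add_right a v r
  nlinarith [sq_nonneg ‖v + r‖, norm_nonneg a, norm_nonneg r,
    neg_abs_le (⟪a, r⟫ : ℝ), sq_nonneg ‖x - w‖]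
end

section
/- Let U be a real Hilbert space, M ∈ ℕ, and S : U → ℝ^M a bounded linear operator. Let λ, β > 0, let z ∈ ℝ^M be fixed, and define L(u) = (λ/2)‖u‖² + (β/(2M))|Su − z|². Then L has a unique minimizer ũ = ((λM/β)I + S*S)⁻¹ S* z, and min_u L(u) = (λ/2) zᵀ (K + (λM/β) I)⁻¹ z, where K = SS* is the Gram matrix. -/
open RealInnerProductSpace

section Aux

variable {U : Type*} [NormedAddCommGroup U] [InnerProductSpace ℝ U] [CompleteSpace U]
variable {M : ℕ}

private lemma key_expand (hM : 0 < M) (S : U →L[ℝ] EuclideanSpace ℝ (Fin M)) (lam β : ℝ)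
    (hβ : 0 < β) (z : EuclideanSpace ℝ (Fin M)) (ut : U)
    (h : (lam * M / β) • ut + ContinuousLinearMap.adjoint S (S ut)
        = ContinuousLinearMap.adjoint S z) (u : U) :
    lam / 2 * ‖u‖ ^ 2 + β / (2 * M) * ‖S u - z‖ ^ 2
      = (lam / 2 * ‖ut‖ ^ 2 + β / (2 * M) * ‖S ut - z‖ ^ 2)
        + lam / 2 * ‖u - ut‖ ^ 2 + β / (2 * M) * ‖S (u - ut)‖ ^ 2 := by
  have hM' : (M : ℝ) ≠ 0 := Nat.cast_ne_zero.mpr hM.ne'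
  have h1 : ‖u‖ ^ 2 = ‖ut‖ ^ 2 + 2 * ⟪ut, u - ut⟫ + ‖u - ut‖ ^ 2 := by
    have := norm_add_sq_real ut (u - ut)
    simpa using this
  have e : S u - z = (S ut - z) + S (u - ut) := by
    rw [map_sub]; abel
  have h2 : ‖S u - z‖ ^ 2
      = ‖S ut - z‖ ^ 2 + 2 * ⟪S ut - z, S (u - ut)⟫ + ‖S (u - ut)‖ ^ 2 := by
    rw [e, norm_add_sq_real]
  have hadj : ContinuousLinearMap.adjoint S (S ut - z)
      = -((lam * M / β) • ut) := by
    rw [map_sub, eq_neg_iff_add_eq_zero]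
    rw [← h]; abel
  have h3 : ⟪S ut - z, S (u - ut)⟫ = -((lam * M / β) * ⟪ut, u - ut⟫) := by
    rw [← ContinuousLinearMap.adjoint_inner_left, hadj, inner_neg_left,
      real_inner_smul_left]
  rw [h1, h2, h3]
  field_simp
  ring

private lemma euler_unique (S : U →L[ℝ] EuclideanSpace ℝ (Fin M)) {γ : ℝ} (hγ : 0 < γ)
    (a b : U)
    (h : γ • a + ContinuousLinearMap.adjoint S (S a)
       = γ • b + ContinuousLinearMap.adjoint S (S b)) : a = b := by
  have hd : γ • (a - b) + ContinuousLinearMap.adjoint S (S (a - b)) = 0 := by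
    rw [map_sub, map_sub, smul_sub]
    rw [show γ • a - γ • b + (ContinuousLinearMap.adjoint S (S a)
        - ContinuousLinearMap.adjoint S (S b))
      = (γ • a + ContinuousLinearMap.adjoint S (S a))
        - (γ • b + ContinuousLinearMap.adjoint S (S b)) by abel, h, sub_self]
  have key : ⟪γ • (a - b) + ContinuousLinearMap.adjoint S (S (a - b)), a - b⟫
      = γ * ‖a - b‖ ^ 2 + ‖S (a - b)‖ ^ 2 := by
    rw [inner_add_left, real_inner_smul_left, ContinuousLinearMap.adjoint_inner_left,
      real_inner_self_eq_norm_sq, real_inner_self_eq_norm_sq]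
  have h2 : γ * ‖a - b‖ ^ 2 + ‖S (a - b)‖ ^ 2 = 0 := by
    rw [← key, hd, inner_zero_left]
  have h3 : ‖a - b‖ ^ 2 = 0 := by nlinarith [sq_nonneg ‖a - b‖, sq_nonneg ‖S (a - b)‖]
  have : a - b = 0 := by
    rwa [pow_eq_zero_iff (by norm_num), norm_eq_zero] at h3
  exact sub_eq_zero.mp this

private lemma exists_w (hM : 0 < M) (S : U →L[ℝ] EuclideanSpace ℝ (Fin M)) {γ : ℝ}
    (hγ : 0 < γ) (z : EuclideanSpace ℝ (Fin M)) :
    ∃ w : EuclideanSpace ℝ (Fin M),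
      S (ContinuousLinearMap.adjoint S w) + γ • w = z := by
  set T : EuclideanSpace ℝ (Fin M) →ₗ[ℝ] EuclideanSpace ℝ (Fin M) :=
    (S.comp (ContinuousLinearMap.adjoint S)).toLinearMap
      + γ • (LinearMap.id : EuclideanSpace ℝ (Fin M) →ₗ[ℝ] EuclideanSpace ℝ (Fin M))
    with hT
  have hTapp : ∀ w, T w = S (ContinuousLinearMap.adjoint S w) + γ • w := by
    intro w; simp [hT]
  have hinj : Function.Injective T := by
    intro a b hab
    rw [hTapp, hTapp] at hab
    have hd : S (ContinuousLinearMap.adjoint S (a - b)) + γ • (a - b) = 0 := by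
      rw [map_sub, map_sub, smul_sub]
      rw [show S (ContinuousLinearMap.adjoint S a) - S (ContinuousLinearMap.adjoint S b)
          + (γ • a - γ • b)
        = (S (ContinuousLinearMap.adjoint S a) + γ • a)
          - (S (ContinuousLinearMap.adjoint S b) + γ • b) by abel, hab, sub_self]
    have key : ⟪S (ContinuousLinearMap.adjoint S (a - b)) + γ • (a - b), a - b⟫
        = ‖ContinuousLinearMap.adjoint S (a - b)‖ ^ 2 + γ * ‖a - b‖ ^ 2 := by
      rw [inner_add_left, real_inner_smul_left,
        ← ContinuousLinearMap.adjoint_inner_right,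
        real_inner_self_eq_norm_sq, real_inner_self_eq_norm_sq]
    have h2 : ‖ContinuousLinearMap.adjoint S (a - b)‖ ^ 2 + γ * ‖a - b‖ ^ 2 = 0 := by
      rw [← key, hd, inner_zero_left]
    have h3 : ‖a - b‖ ^ 2 = 0 := by
      nlinarith [sq_nonneg ‖a - b‖, sq_nonneg ‖ContinuousLinearMap.adjoint S (a - b)‖]
    have : a - b = 0 := by
      rwa [pow_eq_zero_iff (by norm_num), norm_eq_zero] at h3
    exact sub_eq_zero.mp this
  obtain ⟨w, hw⟩ := (LinearMap.injective_iff_surjective.mp hinj) z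
  exact ⟨w, by rw [← hTapp, hw]⟩

end Aux

set_option maxHeartbeats 1600000 in
/-- Representer formula: `L(u) = (λ/2)‖u‖² + (β/2M)|Su − z|²` has a unique minimizer
`ũ` characterized by `((λM/β)I + S*S)ũ = S*z`, and
`min L = (λ/2) zᵀ(K + (λM/β)I)⁻¹z` with `K = SS*`. -/
theorem stmt8 {U : Type*} [NormedAddCommGroup U] [InnerProductSpace ℝ U] [CompleteSpace U]
    {M : ℕ} (hM : 0 < M)
    (S : U →L[ℝ] EuclideanSpace ℝ (Fin M)) (lam β : ℝ) (hlam : 0 < lam) (hβ : 0 < β)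
    (z : EuclideanSpace ℝ (Fin M)) :
    (∃! ut : U, IsMinOn
      (fun u => lam / 2 * ‖u‖ ^ 2 + β / (2 * M) * ‖S u - z‖ ^ 2) Set.univ ut) ∧
    (∀ ut : U, IsMinOn
        (fun u => lam / 2 * ‖u‖ ^ 2 + β / (2 * M) * ‖S u - z‖ ^ 2) Set.univ ut ↔
      (lam * M / β) • ut + ContinuousLinearMap.adjoint S (S ut)
        = ContinuousLinearMap.adjoint S z) ∧
    (∀ (ut : U) (w : EuclideanSpace ℝ (Fin M)),
      IsMinOn (fun u => lam / 2 * ‖u‖ ^ 2 + β / (2 * M) * ‖S u - z‖ ^ 2) Set.univ ut →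
      S (ContinuousLinearMap.adjoint S w) + (lam * M / β) • w = z →
      lam / 2 * ‖ut‖ ^ 2 + β / (2 * M) * ‖S ut - z‖ ^ 2 = lam / 2 * ⟪z, w⟫) := by
  have hM' : (M : ℝ) ≠ 0 := Nat.cast_ne_zero.mpr hM.ne'
  have hγ : 0 < lam * M / β := by positivity
  set γ := lam * M / β with hγdef
  set f : U → ℝ := fun u => lam / 2 * ‖u‖ ^ 2 + β / (2 * M) * ‖S u - z‖ ^ 2 with hf
  -- Euler equation implies minimality
  have euler_min : ∀ ut : U,
      γ • ut + ContinuousLinearMap.adjoint S (S ut) = ContinuousLinearMap.adjoint S z →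
      IsMinOn f Set.univ ut := by
    intro ut h
    rw [isMinOn_univ_iff]
    intro u
    have := key_expand hM S lam β hβ z ut h u
    have h1 : (0:ℝ) ≤ lam / 2 * ‖u - ut‖ ^ 2 := by positivity
    have h2 : (0:ℝ) ≤ β / (2 * M) * ‖S (u - ut)‖ ^ 2 := by positivity
    show lam / 2 * ‖ut‖ ^ 2 + β / (2 * M) * ‖S ut - z‖ ^ 2
      ≤ lam / 2 * ‖u‖ ^ 2 + β / (2 * M) * ‖S u - z‖ ^ 2
    linarith
  -- a solution of the Euler equation
  obtain ⟨w₀, hw₀⟩ := exists_w hM S hγ z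
  set ut₀ : U := ContinuousLinearMap.adjoint S w₀ with hut₀
  have hE₀ : γ • ut₀ + ContinuousLinearMap.adjoint S (S ut₀)
      = ContinuousLinearMap.adjoint S z := by
    rw [← hw₀, map_add, map_smul]
    abel
  have hmin₀ : IsMinOn f Set.univ ut₀ := euler_min ut₀ hE₀
  -- minimality implies Euler equation
  have min_euler : ∀ ut : U, IsMinOn f Set.univ ut →
      γ • ut + ContinuousLinearMap.adjoint S (S ut) = ContinuousLinearMap.adjoint S z := by
    intro ut hmin
    have h1 : f ut ≤ f ut₀ := (isMinOn_univ_iff.mp hmin) ut₀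
    have h2 := key_expand hM S lam β hβ z ut₀ hE₀ ut
    have h3 : (0:ℝ) ≤ β / (2 * M) * ‖S (ut - ut₀)‖ ^ 2 := by positivity
    have h1' : lam / 2 * ‖ut‖ ^ 2 + β / (2 * M) * ‖S ut - z‖ ^ 2
        ≤ lam / 2 * ‖ut₀‖ ^ 2 + β / (2 * M) * ‖S ut₀ - z‖ ^ 2 := h1
    have h4 : lam / 2 * ‖ut - ut₀‖ ^ 2 ≤ 0 := by linarith
    have h5 : ‖ut - ut₀‖ ^ 2 = 0 := by
      nlinarith [sq_nonneg ‖ut - ut₀‖]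
    have h6 : ut = ut₀ := by
      have : ut - ut₀ = 0 := by
        rwa [pow_eq_zero_iff (by norm_num), norm_eq_zero] at h5
      exact sub_eq_zero.mp this
    rw [h6]; exact hE₀
  refine ⟨⟨ut₀, hmin₀, ?_⟩, fun ut => ⟨min_euler ut, euler_min ut⟩, ?_⟩
  · intro y hy
    exact euler_unique S hγ y ut₀ ((min_euler y hy).trans hE₀.symm)
  · intro ut w hmin hw
    have hEut := min_euler ut hmin
    have hEw : γ • (ContinuousLinearMap.adjoint S w)
        + ContinuousLinearMap.adjoint S (S (ContinuousLinearMap.adjoint S w))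
        = ContinuousLinearMap.adjoint S z := by
      rw [← hw, map_add, map_smul]; abel
    have hut : ut = ContinuousLinearMap.adjoint S w :=
      euler_unique S hγ ut _ (hEut.trans hEw.symm)
    subst hut
    have e1 : S (ContinuousLinearMap.adjoint S w) - z = -(γ • w) := by
      rw [← hw]; abel
    have e2 : ‖S (ContinuousLinearMap.adjoint S w) - z‖ ^ 2 = γ ^ 2 * ‖w‖ ^ 2 := by
      rw [e1, norm_neg, norm_smul, mul_pow, Real.norm_eq_abs, sq_abs]
    have e3 : ‖ContinuousLinearMap.adjoint S w‖ ^ 2 = ⟪w, z⟫ - γ * ‖w‖ ^ 2 := by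
      rw [← real_inner_self_eq_norm_sq, ContinuousLinearMap.adjoint_inner_left]
      have : S (ContinuousLinearMap.adjoint S w) = z - γ • w := by
        rw [← hw]; abel
      rw [this, inner_sub_right, real_inner_smul_right, real_inner_self_eq_norm_sq]
    rw [e2, e3, real_inner_comm z w, hγdef]
    field_simp
    ring
end

section
/- Let ξ₁,…,ξ_M be i.i.d. uniform samples from {1,…,N}, forming the multiset I, and let ξ'₁,…,ξ'_M be an independent i.i.d. copy. For each i, let I_(i) be I with ξᵢ replaced by ξ'ᵢ. Let A : (samples) → V be any measurable map into a space V, write (û_I) = A(I), and let ψ(v; j) be a bounded measurable function of v ∈ V and j ∈ {1,…,N}. Suppose the ε-stability condition |E[ψ(A(I); ξ'ᵢ) − ψ(A(I_(i)); ξ'ᵢ)]| ≤ ε holds (expectation over I, I', and uniform i ∈ {1,…,M}). Then |E_I[ (1/M) Σ_{i=1}^M ψ(A(I); ξᵢ) − E_ξ[ψ(A(I); ξ)] ]| ≤ ε, where ξ is an independent uniform sample from {1,…,N}. -/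
open MeasureTheory ProbabilityTheory
open scoped BigOperators ENNReal

/-!
Independence and uniformity make the joint law of `(ξ, ξ')` uniform on `Fin N ^ (Fin M ⊕ Fin M)`,
so every expectation in the statement is a finite uniform average. That average is invariant
under exchanging the coordinates `ξᵢ` and `ξ'ᵢ`, which turns `E ψ(A(I); ξᵢ)` into
`E ψ(A(I_(i)); ξ'ᵢ)`; and as `ξ'ᵢ` does not enter `I`, `E ψ(A(I); ξ'ᵢ)` is the population mean.
Hence the expected generalization gap is exactly minus the stability term.
-/

namespace ProbabilityTheory

variable {Ω ι α : Type*} [MeasurableSpace Ω] {μ : Measure Ω} [Fintype ι] [DecidableEq ι]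
  [Fintype α] [MeasurableSpace α] [MeasurableSingletonClass α] {X : ι → Ω → α}

theorem iIndepFun.measure_preimage_eq_card_inv (hindep : iIndepFun X μ)
    (hunif : ∀ i a, μ {ω | X i ω = a} = (Fintype.card α : ℝ≥0∞)⁻¹) (c : ι → α) :
    μ ((fun ω i => X i ω) ⁻¹' {c}) = (Fintype.card (ι → α) : ℝ≥0∞)⁻¹ := by
  have hfiber : (fun ω i => X i ω) ⁻¹' {c} = ⋂ i, X i ⁻¹' {c i} := by
    ext ω
    simp [funext_iff]
  rw [hfiber, hindep.meas_iInter fun i => ⟨{c i}, measurableSet_singleton _, rfl⟩]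
  simp [Set.preimage, hunif, ENNReal.inv_pow]

theorem iIndepFun.integral_comp_eq_expect [IsFiniteMeasure μ] (hX : ∀ i, Measurable (X i))
    (hindep : iIndepFun X μ)
    (hunif : ∀ i a, μ {ω | X i ω = a} = (Fintype.card α : ℝ≥0∞)⁻¹) (g : (ι → α) → ℝ) :
    ∫ ω, g (fun i => X i ω) ∂μ = 𝔼 c, g c := by
  have hZ : Measurable fun ω i => X i ω := measurable_pi_lambda _ hX
  rw [← integral_map hZ.aemeasurable (measurable_of_finite g).aestronglyMeasurable,
    integral_fintype .of_finite, Fintype.expect_eq_sum_div_card, Finset.sum_div]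
  refine Finset.sum_congr rfl fun c _ => ?_
  rw [Measure.real, Measure.map_apply hZ (measurableSet_singleton c),
    hindep.measure_preimage_eq_card_inv hunif c]
  simp [div_eq_inv_mul]

end ProbabilityTheory

section Resampling

variable {ι α : Type*} [Fintype ι] [DecidableEq ι] [Fintype α]

theorem Fintype.expect_comp_eval [Nonempty α] (i : ι) (f : α → ℝ) :
    𝔼 b : ι → α, f (b i) = 𝔼 s, f s := by
  rw [Fintype.expect_equiv (Equiv.piSplitAt i fun _ => α) (fun b => f (b i)) (fun p => f p.1)
    fun _ => rfl, ← Finset.univ_product_univ, Finset.expect_product]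
  simp

theorem Fintype.expect_sumElim {κ : Type*} [Fintype κ] [DecidableEq κ] (h : (ι ⊕ κ → α) → ℝ) :
    𝔼 c, h c = 𝔼 a, 𝔼 b, h (Sum.elim a b) := by
  rw [Fintype.expect_equiv (Equiv.sumArrowEquivProdArrow ι κ α) h (fun p => h (Sum.elim p.1 p.2))
    fun c => congrArg h (Sum.elim_comp_inl_inr c).symm, ← Finset.univ_product_univ,
    Finset.expect_product]

omit [Fintype ι] [Fintype α] in
theorem comp_swap_comp_inl (c : ι ⊕ ι → α) (i : ι) :
    c ∘ Equiv.swap (Sum.inl i) (Sum.inr i) ∘ Sum.inl =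
      Function.update (c ∘ Sum.inl) i (c (Sum.inr i)) := by
  funext j
  rcases eq_or_ne j i with rfl | hj
  · simp
  · simp [hj, Equiv.swap_apply_of_ne_of_ne]

variable (L : (ι → α) → α → ℝ) (i : ι)

theorem expect_apply_inl_eq_expect_update_inr :
    𝔼 c : ι ⊕ ι → α, L (c ∘ Sum.inl) (c (Sum.inl i)) =
      𝔼 c : ι ⊕ ι → α, L (Function.update (c ∘ Sum.inl) i (c (Sum.inr i))) (c (Sum.inr i)) :=
  Fintype.expect_equiv ((Equiv.swap (Sum.inl i) (Sum.inr i)).arrowCongr (Equiv.refl α)) _ _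
    fun c => by
      rw [← comp_swap_comp_inl]
      simp [Function.comp_def]

theorem expect_apply_inr_eq_expect_expect [Nonempty α] :
    𝔼 c : ι ⊕ ι → α, L (c ∘ Sum.inl) (c (Sum.inr i)) =
      𝔼 c : ι ⊕ ι → α, 𝔼 s, L (c ∘ Sum.inl) s := by
  simp only [Fintype.expect_sumElim (ι := ι) (κ := ι), Sum.elim_comp_inl, Sum.elim_inr,
    Fintype.expect_comp_eval, Fintype.expect_const]

theorem expect_generalizationGap_eq_neg_expect_stability [Nonempty ι] [Nonempty α] :
    𝔼 c : ι ⊕ ι → α, (𝔼 j, L (c ∘ Sum.inl) (c (Sum.inl j)) - 𝔼 s, L (c ∘ Sum.inl) s) =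
      -𝔼 j, 𝔼 c : ι ⊕ ι → α, (L (c ∘ Sum.inl) (c (Sum.inr j)) -
        L (Function.update (c ∘ Sum.inl) j (c (Sum.inr j))) (c (Sum.inr j))) := by
  calc _ = 𝔼 j, (𝔼 c : ι ⊕ ι → α, L (c ∘ Sum.inl) (c (Sum.inl j)) -
          𝔼 c : ι ⊕ ι → α, 𝔼 s, L (c ∘ Sum.inl) s) := by
        rw [Finset.expect_sub_distrib, Finset.expect_comm, Finset.expect_sub_distrib,
          Fintype.expect_const]
    _ = 𝔼 j, -(𝔼 c : ι ⊕ ι → α, L (c ∘ Sum.inl) (c (Sum.inr j)) -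
          𝔼 c : ι ⊕ ι → α, L (Function.update (c ∘ Sum.inl) j (c (Sum.inr j))) (c (Sum.inr j))) := by
        refine Finset.expect_congr rfl fun j _ => ?_
        rw [expect_apply_inl_eq_expect_update_inr, expect_apply_inr_eq_expect_expect, neg_sub]
    _ = _ := by simp only [Finset.expect_sub_distrib, Finset.expect_neg_distrib]

end Resampling

theorem Fin.one_div_mul_sum_eq_expect {n : ℕ} (f : Fin n → ℝ) :
    1 / (n : ℝ) * ∑ i, f i = 𝔼 i, f i := by
  rw [Fintype.expect_eq_sum_div_card, Fintype.card_fin, one_div_mul_eq_div]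

theorem stmt10_general {Ω : Type*} [MeasurableSpace Ω] (μ : Measure Ω) [IsProbabilityMeasure μ]
    {V : Type*}
    (N M : ℕ) (hN : 0 < N) (hM : 0 < M)
    (ξ ξ' : Fin M → Ω → Fin N)
    (hmeas : ∀ i, Measurable (ξ i)) (hmeas' : ∀ i, Measurable (ξ' i))
    (hindep : iIndepFun (Sum.elim ξ ξ') μ)
    (hunif : ∀ (j : Fin M ⊕ Fin M) (s : Fin N),
      μ {ω | Sum.elim ξ ξ' j ω = s} = (N : ENNReal)⁻¹)
    (A : (Fin M → Fin N) → V)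
    (ψ : V → Fin N → ℝ)
    (ε : ℝ)
    (hstab : |(1 / (M : ℝ)) * ∑ i : Fin M,
        ∫ ω, (ψ (A fun j => ξ j ω) (ξ' i ω)
          - ψ (A (Function.update (fun j => ξ j ω) i (ξ' i ω))) (ξ' i ω)) ∂μ| ≤ ε) :
    |∫ ω, ((1 / (M : ℝ)) * ∑ i : Fin M, ψ (A fun j => ξ j ω) (ξ i ω)
        - (1 / (N : ℝ)) * ∑ s : Fin N, ψ (A fun j => ξ j ω) s) ∂μ| ≤ ε := by
  have : Nonempty (Fin N) := ⟨⟨0, hN⟩⟩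
  have : Nonempty (Fin M) := ⟨⟨0, hM⟩⟩
  have hlaw := hindep.integral_comp_eq_expect (Sum.forall.2 ⟨hmeas, hmeas'⟩)
    fun j s => by simpa using hunif j s
  simp only [Fin.one_div_mul_sum_eq_expect] at hstab ⊢
  erw [hlaw fun c => 𝔼 i, ψ (A (c ∘ Sum.inl)) (c (Sum.inl i)) - 𝔼 s, ψ (A (c ∘ Sum.inl)) s,
    expect_generalizationGap_eq_neg_expect_stability (fun a s => ψ (A a) s), abs_neg]
  convert hstab using 4 with i
  exact (hlaw _).symm

/-- Stability implies on-average generalization: if the proximal map built from an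
i.i.d. mini-batch `ξ₁,…,ξ_M` (uniform on `{1,…,N}`) is ε-stable under replacing one
sample by an independent copy, then the empirical mini-batch average of `ψ` deviates
from the population mean by at most ε in expectation. -/
theorem stmt10 {Ω : Type*} [MeasurableSpace Ω] (μ : Measure Ω) [IsProbabilityMeasure μ]
    {V : Type*} [MeasurableSpace V]
    (N M : ℕ) (hN : 0 < N) (hM : 0 < M)
    (ξ ξ' : Fin M → Ω → Fin N)
    (hmeas : ∀ i, Measurable (ξ i)) (hmeas' : ∀ i, Measurable (ξ' i))
    (hindep : iIndepFun (Sum.elim ξ ξ') μ)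
    (hunif : ∀ (j : Fin M ⊕ Fin M) (s : Fin N),
      μ {ω | Sum.elim ξ ξ' j ω = s} = (N : ENNReal)⁻¹)
    (A : (Fin M → Fin N) → V) (hA : Measurable A)
    (ψ : V → Fin N → ℝ) (hψ : ∀ j, Measurable (fun v => ψ v j))
    (B : ℝ) (hψb : ∀ v j, |ψ v j| ≤ B)
    (ε : ℝ)
    (hstab : |(1 / (M : ℝ)) * ∑ i : Fin M,
        ∫ ω, (ψ (A fun j => ξ j ω) (ξ' i ω)
          - ψ (A (Function.update (fun j => ξ j ω) i (ξ' i ω))) (ξ' i ω)) ∂μ| ≤ ε) :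
    |∫ ω, ((1 / (M : ℝ)) * ∑ i : Fin M, ψ (A fun j => ξ j ω) (ξ i ω)
        - (1 / (N : ℝ)) * ∑ s : Fin N, ψ (A fun j => ξ j ω) s) ∂μ| ≤ ε :=
  stmt10_general μ N M hN hM ξ ξ' hmeas hmeas' hindep hunif A ψ ε hstab
end
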